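/- arXiv:2604.16710 — 4 statements merged into one kernel-verified Lean document; each statement's English description precedes it below -/
import Mathlib

section
/- Suppose A = W - D is Lyapunov diagonally stable. If x, y ∈ ℝ^n both satisfy Dx = [Wx + u]_0^1 and Dy = [Wy + u]_0^1, then x = y. Consequently, for each input u, the linear-threshold network ẋ = -Dx + [Wx + u]_0^1 admits exactly one equilibrium point. -/
/-!
Lyapunov diagonal stability of `W - D` says that `x ↦ Wx + u - Dx` is strictly decreasing for
the inner product weighted by `Λ`. Since `sat` is monotone and `1`-Lipschitz,
`(sat a - sat b)² ≤ (sat a - sat b)(a - b)`, so at two equilibria every term of the weighted sum `∑ λᵢ (xᵢ - yᵢ)((Wx - Wy)ᵢ - dᵢ(xᵢ - yᵢ))`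
is nonnegative: hence they coincide. For existence, solve the first equation for `x₀` as a
function of the other coordinates (the intermediate value theorem gives a solution in
`[0, 1/d₀]`, the dissipativity makes it unique, and a function into a compact space with closed
graph is continuous) and substitute it: the reduced system in one dimension less is again
dissipative, so induction on `n` applies.
-/

open Matrix

/-- Saturation nonlinearity `[z]₀¹ = max(0, min(z, 1))`. -/
noncomputable def sat (z : ℝ) : ℝ := max 0 (min z 1)

lemma sat_nonneg (z : ℝ) : 0 ≤ sat z := le_max_left _ _

lemma sat_le_one (z : ℝ) : sat z ≤ 1 := max_le zero_le_one (min_le_right _ _)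

@[fun_prop]
lemma continuous_sat : Continuous sat := by
  unfold sat
  fun_prop

lemma monotone_sat : Monotone sat := fun _ _ h => max_le_max le_rfl (min_le_min h le_rfl)

lemma abs_sat_sub_sat_le (a b : ℝ) : |sat a - sat b| ≤ |a - b| := by
  unfold sat
  rw [max_comm 0, max_comm 0]
  refine (abs_max_sub_max_le_abs _ _ _).trans ((abs_min_sub_min_le_max _ _ _ _).trans ?_)
  simp

lemma sq_sat_sub_le (a b : ℝ) : (sat a - sat b) ^ 2 ≤ (sat a - sat b) * (a - b) := by
  have hsign : 0 ≤ (sat a - sat b) * (a - b) := by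
    rcases le_total b a with h | h
    · exact mul_nonneg (sub_nonneg.2 (monotone_sat h)) (sub_nonneg.2 h)
    · exact mul_nonneg_of_nonpos_of_nonpos (sub_nonpos.2 (monotone_sat h)) (sub_nonpos.2 h)
  calc (sat a - sat b) ^ 2 = |sat a - sat b| * |sat a - sat b| := by rw [sq, abs_mul_abs_self]
    _ ≤ |sat a - sat b| * |a - b| :=
      mul_le_mul_of_nonneg_left (abs_sat_sub_sat_le a b) (abs_nonneg _)
    _ = (sat a - sat b) * (a - b) := by rw [← abs_mul, abs_of_nonneg hsign]

lemma mul_sub_sub_nonneg_of_mul_eq_sat {d s t a b : ℝ} (hd : 0 < d)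
    (hs : d * s = sat a) (ht : d * t = sat b) : 0 ≤ (s - t) * (a - b - d * (s - t)) := by
  have key := sq_sat_sub_le a b
  rw [← hs, ← ht] at key
  refine (mul_nonneg_iff_of_pos_left hd).1 ?_
  nlinarith

lemma mem_Icc_of_mul_eq_sat {d t a : ℝ} (hd : 0 < d) (h : d * t = sat a) : t ∈ Set.Icc 0 d⁻¹ := by
  have h0 := sat_nonneg a
  have h1 := sat_le_one a
  constructor
  · nlinarith
  · rw [← one_div, le_div_iff₀ hd]
    linarith

lemma exists_mul_eq_sat {d : ℝ} (hd : 0 < d) {g : ℝ → ℝ} (hg : Continuous g) :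
    ∃ t, d * t = sat (g t) := by
  have hf : Continuous fun t => d * t - sat (g t) := by fun_prop
  have hmem : (0 : ℝ) ∈ Set.Icc (d * 0 - sat (g 0)) (d * d⁻¹ - sat (g d⁻¹)) := by
    rw [mul_inv_cancel₀ hd.ne']
    exact ⟨by linarith [sat_nonneg (g 0)], by linarith [sat_le_one (g d⁻¹)]⟩
  obtain ⟨t, -, ht⟩ := intermediate_value_Icc (inv_pos.2 hd).le hf.continuousOn hmem
  exact ⟨t, sub_eq_zero.1 ht⟩

lemma continuous_of_isClosed_graph {X Y : Type*} [TopologicalSpace X] [TopologicalSpace Y]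
    [CompactSpace Y] {f : X → Y} (hf : IsClosed {p : X × Y | f p.1 = p.2}) : Continuous f := by
  refine continuous_iff_isClosed.2 fun C hC => ?_
  have hpre : f ⁻¹' C = Prod.fst '' ({p : X × Y | f p.1 = p.2} ∩ Prod.snd ⁻¹' C) := by
    ext x
    simp
  rw [hpre]
  exact isClosedMap_fst_of_compactSpace _ (hf.inter (hC.preimage continuous_snd))

lemma exists_continuous_mul_eq_sat {X : Type*} [TopologicalSpace X] {d : ℝ} (hd : 0 < d)
    {G : X × ℝ → ℝ} (hG : Continuous G)
    (huniq : ∀ x s t, d * s = sat (G (x, s)) → d * t = sat (G (x, t)) → s = t) :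
    ∃ φ : X → ℝ, Continuous φ ∧ ∀ x, d * φ x = sat (G (x, φ x)) := by
  choose φ hφ using fun x => exists_mul_eq_sat hd (hG.comp (Continuous.prodMk_right x))
  let ψ : X → Set.Icc 0 d⁻¹ := fun x => ⟨φ x, mem_Icc_of_mul_eq_sat hd (hφ x)⟩
  have hgraph : {p : X × Set.Icc 0 d⁻¹ | ψ p.1 = p.2}
      = {p | d * (p.2 : ℝ) = sat (G (p.1, p.2))} := by
    ext ⟨x, t, ht⟩
    constructor
    · intro h
      change d * t = sat (G (x, t))
      rw [← show φ x = t from congrArg Subtype.val h]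
      exact hφ x
    · exact fun h => Subtype.ext (huniq x _ _ (hφ x) h)
  have hψ : Continuous ψ := by
    refine continuous_of_isClosed_graph (hgraph ▸ isClosed_eq ?_ ?_)
    all_goals fun_prop
  exact ⟨φ, continuous_subtype_val.comp hψ, hφ⟩

section System

variable {ι : Type*} [Fintype ι]

/-- For `h x = Wx + u` these are the equilibria of `ẋ = -Dx + sat (Wx + u)`. -/
def IsSatEquilibrium (d : ι → ℝ) (h : (ι → ℝ) → ι → ℝ) (x : ι → ℝ) : Prop :=
  ∀ i, d i * x i = sat (h x i)

/-- `x ↦ h x - D x` is strictly decreasing for the inner product weighted by `lam`. -/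
def StrictlyDissipative (lam d : ι → ℝ) (h : (ι → ℝ) → ι → ℝ) : Prop :=
  ∀ x y, x ≠ y → ∑ i, lam i * (x i - y i) * (h x i - h y i - d i * (x i - y i)) < 0

lemma dotProduct_lyapunov_mulVec [DecidableEq ι] (A : Matrix ι ι ℝ) (lam z : ι → ℝ) :
    z ⬝ᵥ ((Aᵀ * diagonal lam + diagonal lam * A) *ᵥ z) = 2 * ∑ i, lam i * z i * (A *ᵥ z) i := by
  rw [add_mulVec, dotProduct_add, ← mulVec_mulVec, ← mulVec_mulVec, dotProduct_mulVec z Aᵀ,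
    vecMul_transpose]
  simp only [dotProduct, mulVec_diagonal]
  rw [← Finset.sum_add_distrib, Finset.mul_sum]
  exact Finset.sum_congr rfl fun i _ => by ring

lemma strictlyDissipative_affine [DecidableEq ι] {lam d : ι → ℝ} {W : Matrix ι ι ℝ} (u : ι → ℝ)
    (hneg : ∀ z : ι → ℝ, z ≠ 0 →
      z ⬝ᵥ (((W - diagonal d)ᵀ * diagonal lam + diagonal lam * (W - diagonal d)) *ᵥ z) < 0) :
    StrictlyDissipative lam d fun x => W *ᵥ x + u := by
  intro x y hxy
  have h := hneg (x - y) (sub_ne_zero.2 hxy)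
  rw [dotProduct_lyapunov_mulVec] at h
  have hsum : ∑ i, lam i * (x - y) i * ((W - diagonal d) *ᵥ (x - y)) i
      = ∑ i, lam i * (x i - y i) * ((W *ᵥ x + u) i - (W *ᵥ y + u) i - d i * (x i - y i)) :=
    Finset.sum_congr rfl fun i _ => by
      simp only [sub_mulVec, mulVec_sub, mulVec_diagonal, Pi.sub_apply, Pi.add_apply]
      ring
  linarith

theorem StrictlyDissipative.eq_of_isSatEquilibrium {lam d : ι → ℝ} {h : (ι → ℝ) → ι → ℝ}
    (hdiss : StrictlyDissipative lam d h) (hd : ∀ i, 0 < d i) (hlam : ∀ i, 0 ≤ lam i)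
    {x y : ι → ℝ} (hx : IsSatEquilibrium d h x) (hy : IsSatEquilibrium d h y) : x = y := by
  by_contra hxy
  refine (hdiss x y hxy).not_ge (Finset.sum_nonneg fun i _ => ?_)
  rw [mul_assoc]
  exact mul_nonneg (hlam i) (mul_sub_sub_nonneg_of_mul_eq_sat (hd i) (hx i) (hy i))

end System

section Fin

variable {n : ℕ} {lam d : Fin (n + 1) → ℝ} {h : (Fin (n + 1) → ℝ) → Fin (n + 1) → ℝ}

lemma StrictlyDissipative.sum_succ_neg (hdiss : StrictlyDissipative lam d h) (hd : 0 < d 0)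
    (hlam : 0 ≤ lam 0) {x y : Fin (n + 1) → ℝ} (hxy : x ≠ y)
    (hx : d 0 * x 0 = sat (h x 0)) (hy : d 0 * y 0 = sat (h y 0)) :
    ∑ i : Fin n, lam i.succ * (x i.succ - y i.succ) *
      (h x i.succ - h y i.succ - d i.succ * (x i.succ - y i.succ)) < 0 := by
  have hzero : 0 ≤ lam 0 * (x 0 - y 0) * (h x 0 - h y 0 - d 0 * (x 0 - y 0)) := by
    rw [mul_assoc]
    exact mul_nonneg hlam (mul_sub_sub_nonneg_of_mul_eq_sat hd hx hy)
  have hsum := hdiss x y hxy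
  rw [Fin.sum_univ_succ] at hsum
  linarith

lemma StrictlyDissipative.eq_of_cons (hdiss : StrictlyDissipative lam d h) (hd : 0 < d 0)
    (hlam : 0 ≤ lam 0) {x' : Fin n → ℝ} {s t : ℝ}
    (hs : d 0 * s = sat (h (Fin.cons s x') 0)) (ht : d 0 * t = sat (h (Fin.cons t x') 0)) :
    s = t := by
  by_contra hst
  have hne : (Fin.cons s x' : Fin (n + 1) → ℝ) ≠ Fin.cons t x' :=
    fun e => hst (by simpa using congrFun e 0)
  simpa using hdiss.sum_succ_neg hd hlam hne (by simpa using hs) (by simpa using ht)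

lemma StrictlyDissipative.tail_cons (hdiss : StrictlyDissipative lam d h) (hd : 0 < d 0)
    (hlam : 0 ≤ lam 0) {φ : (Fin n → ℝ) → ℝ}
    (hφ : ∀ x', d 0 * φ x' = sat (h (Fin.cons (φ x') x') 0)) :
    StrictlyDissipative (Fin.tail lam) (Fin.tail d)
      fun x' => Fin.tail (h (Fin.cons (φ x') x')) := by
  intro x' y' hne
  have hne' : (Fin.cons (φ x') x' : Fin (n + 1) → ℝ) ≠ Fin.cons (φ y') y' :=
    fun e => hne (by simpa using congrArg Fin.tail e)
  simpa [Fin.tail] using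
    hdiss.sum_succ_neg hd hlam hne' (by simpa using hφ x') (by simpa using hφ y')

end Fin

theorem StrictlyDissipative.exists_isSatEquilibrium : ∀ {n : ℕ} {lam d : Fin n → ℝ}
    {h : (Fin n → ℝ) → Fin n → ℝ}, StrictlyDissipative lam d h → (∀ i, 0 < d i) →
    (∀ i, 0 ≤ lam i) → Continuous h → ∃ x, IsSatEquilibrium d h x
  | 0, _, _, _, _, _, _, _ => ⟨0, fun i => i.elim0⟩
  | n + 1, lam, d, h, hdiss, hd, hlam, hc => by
    obtain ⟨φ, hφc, hφ⟩ := exists_continuous_mul_eq_sat (hd 0)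
      (G := fun p : (Fin n → ℝ) × ℝ => h (Fin.cons p.2 p.1) 0) (by fun_prop)
      fun x' s t => hdiss.eq_of_cons (hd 0) (hlam 0)
    obtain ⟨x', hx'⟩ := (hdiss.tail_cons (hd 0) (hlam 0) hφ).exists_isSatEquilibrium
      (fun i => hd i.succ) (fun i => hlam i.succ) (by fun_prop)
    exact ⟨Fin.cons (φ x') x', Fin.cases (hφ x') hx'⟩

theorem LTN_equilibrium_unique_general
    (n : ℕ)
    (d : Fin n → ℝ) (hd : ∀ i, 0 < d i)
    (W : Matrix (Fin n) (Fin n) ℝ) (u : Fin n → ℝ)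
    (A : Matrix (Fin n) (Fin n) ℝ) (hA : A = W - Matrix.diagonal d)
    (hLDS : ∃ lam : Fin n → ℝ, (∀ i, 0 < lam i) ∧
      ∀ z : Fin n → ℝ, z ≠ 0 →
        z ⬝ᵥ ((Aᵀ * Matrix.diagonal lam + Matrix.diagonal lam * A) *ᵥ z) < 0) :
    (∀ x y : Fin n → ℝ,
        (∀ i, d i * x i = sat ((W *ᵥ x + u) i)) →
        (∀ i, d i * y i = sat ((W *ᵥ y + u) i)) → x = y)
    ∧ ∃! x : Fin n → ℝ, ∀ i, d i * x i = sat ((W *ᵥ x + u) i) := by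
  obtain ⟨lam, hlam, hneg⟩ := hLDS
  subst hA
  have hdiss := strictlyDissipative_affine u hneg
  have huniq : ∀ x y : Fin n → ℝ, IsSatEquilibrium d (fun x => W *ᵥ x + u) x →
      IsSatEquilibrium d (fun x => W *ᵥ x + u) y → x = y :=
    fun _ _ => hdiss.eq_of_isSatEquilibrium hd fun i => (hlam i).le
  obtain ⟨x, hx⟩ := hdiss.exists_isSatEquilibrium hd (fun i => (hlam i).le) (by fun_prop)
  exact ⟨huniq, x, hx, fun y hy => huniq y x hy hx⟩

/-- **Uniqueness of the LTN equilibrium under Lyapunov diagonal stability.**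
If `A = W - D` is Lyapunov diagonally stable, any two solutions of
`Dx = [Wx + u]₀¹` coincide, and the LTN `ẋ = -Dx + [Wx + u]₀¹` admits exactly
one equilibrium. -/
theorem LTN_equilibrium_unique
    (n : ℕ) (hn : 1 ≤ n)
    (d : Fin n → ℝ) (hd : ∀ i, 0 < d i)
    (W : Matrix (Fin n) (Fin n) ℝ) (u : Fin n → ℝ)
    (A : Matrix (Fin n) (Fin n) ℝ) (hA : A = W - Matrix.diagonal d)
    (hLDS : ∃ lam : Fin n → ℝ, (∀ i, 0 < lam i) ∧
      ∀ z : Fin n → ℝ, z ≠ 0 →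
        z ⬝ᵥ ((Aᵀ * Matrix.diagonal lam + Matrix.diagonal lam * A) *ᵥ z) < 0) :
    (∀ x y : Fin n → ℝ,
        (∀ i, d i * x i = sat ((W *ᵥ x + u) i)) →
        (∀ i, d i * y i = sat ((W *ᵥ y + u) i)) → x = y)
    ∧ ∃! x : Fin n → ℝ, ∀ i, d i * x i = sat ((W *ᵥ x + u) i) :=
  LTN_equilibrium_unique_general n d hd W u A hA hLDS
end

section
/- Let τ > 0 and x ∈ X. Then f_τ(x) = 0, where f_τ(x) = (1/τ)(-Dx + [Dx + τ(Ax + u)]_0^1), holds if and only if for every index i: (Ax + u)_i ≤ 0 whenever d_i x_i = 0, (Ax + u)_i = 0 whenever 0 < d_i x_i < 1, and (Ax + u)_i ≥ 0 whenever d_i x_i = 1. In particular, the equilibrium set of the τ-LTN family is independent of τ. -/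
/-
At every coordinate `f_τ(x) = 0` reads `s = [s + τ g]₀¹` with `s = dᵢxᵢ ∈ [0,1]` and
`g = (Ax + u)ᵢ`. Since the saturation is the projection onto `[0,1]`, this holds iff `g`
vanishes or points out of `[0,1]` at `s`, a condition that sees only the sign of `τ g`.
-/

open Matrix

/-- The τ-LTN vector field `f_τ(x) = (1/τ)(-Dx + [Dx + τ(Ax + u)]₀¹)`. -/
noncomputable def fTau (n : ℕ) (d : Fin n → ℝ) (A : Matrix (Fin n) (Fin n) ℝ)
    (u : Fin n → ℝ) (τ : ℝ) (x : Fin n → ℝ) : Fin n → ℝ :=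
  τ⁻¹ • (-(Matrix.diagonal d *ᵥ x)
    + fun i => sat ((Matrix.diagonal d *ᵥ x + τ • (A *ᵥ x + u)) i))

lemma sat_eq_zero_iff {z : ℝ} : sat z = 0 ↔ z ≤ 0 := by
  unfold sat
  constructor
  · intro h
    by_contra! hz
    have : 0 < min z 1 := lt_min hz one_pos
    linarith [le_max_right 0 (min z 1)]
  · intro hz
    exact max_eq_left (min_le_of_left_le hz)

lemma sat_eq_one_iff {z : ℝ} : sat z = 1 ↔ 1 ≤ z := by
  unfold sat
  constructor
  · intro h
    by_contra! hz
    have : max 0 (min z 1) < 1 := max_lt one_pos (min_lt_of_left_lt hz)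
    linarith
  · intro hz
    rw [min_eq_right hz, max_eq_right zero_le_one]

lemma sat_eq_iff_of_mem_Ioo {s z : ℝ} (hs : s ∈ Set.Ioo (0 : ℝ) 1) : sat z = s ↔ z = s := by
  obtain ⟨hs0, hs1⟩ := hs
  constructor
  · intro h
    have hz0 : 0 < z := by
      by_contra! hz
      linarith [sat_eq_zero_iff.mpr hz]
    have hz1 : z < 1 := by
      by_contra! hz
      linarith [sat_eq_one_iff.mpr hz]
    rwa [sat, min_eq_left hz1.le, max_eq_right hz0.le] at h
  · rintro rfl
    rw [sat, min_eq_left hs1.le, max_eq_right hs0.le]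

lemma sat_add_mul_eq_self_iff {s t g : ℝ} (hs : s ∈ Set.Icc (0 : ℝ) 1) (ht : 0 < t) :
    sat (s + t * g) = s ↔
      (s = 0 → g ≤ 0) ∧ (0 < s → s < 1 → g = 0) ∧ (s = 1 → 0 ≤ g) := by
  obtain ⟨hs0, hs1⟩ := hs
  rcases hs0.eq_or_lt with rfl | hs0
  · simp [sat_eq_zero_iff, mul_nonpos_iff_pos_imp_nonpos, ht, ht.le]
  rcases hs1.eq_or_lt with rfl | hs1
  · simp [sat_eq_one_iff, mul_nonneg_iff_of_pos_left ht]
  · simp [sat_eq_iff_of_mem_Ioo ⟨hs0, hs1⟩, ht.ne', hs0, hs1, hs0.ne', hs1.ne]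

lemma fTau_apply (n : ℕ) (d : Fin n → ℝ) (A : Matrix (Fin n) (Fin n) ℝ) (u : Fin n → ℝ)
    (τ : ℝ) (x : Fin n → ℝ) (i : Fin n) :
    fTau n d A u τ x i = τ⁻¹ * (sat (d i * x i + τ * (A *ᵥ x + u) i) - d i * x i) := by
  simp only [fTau, Pi.smul_apply, Pi.add_apply, Pi.neg_apply, mulVec_diagonal, smul_eq_mul]
  ring

lemma fTau_eq_zero_iff (n : ℕ) (d : Fin n → ℝ) (A : Matrix (Fin n) (Fin n) ℝ)
    (u : Fin n → ℝ) {τ : ℝ} (hτ : τ ≠ 0) (x : Fin n → ℝ) :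
    fTau n d A u τ x = 0 ↔ ∀ i, sat (d i * x i + τ * (A *ᵥ x + u) i) = d i * x i := by
  simp only [funext_iff, fTau_apply, Pi.zero_apply, mul_eq_zero, inv_eq_zero, hτ, false_or,
    sub_eq_zero]

theorem tau_LTN_equilibrium_characterization_general
    (n : ℕ)
    (d : Fin n → ℝ) (u : Fin n → ℝ)
    (A : Matrix (Fin n) (Fin n) ℝ)
    (τ : ℝ) (hτ : 0 < τ)
    (x : Fin n → ℝ) (hx : ∀ i, d i * x i ∈ Set.Icc (0:ℝ) 1) :
    fTau n d A u τ x = 0 ↔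
      ∀ i, (d i * x i = 0 → (A *ᵥ x + u) i ≤ 0)
        ∧ (0 < d i * x i → d i * x i < 1 → (A *ᵥ x + u) i = 0)
        ∧ (d i * x i = 1 → 0 ≤ (A *ᵥ x + u) i) := by
  rw [fTau_eq_zero_iff n d A u hτ.ne' x]
  exact forall_congr' fun i => sat_add_mul_eq_self_iff (hx i) hτ

/-- **τ-independence of the τ-LTN equilibrium conditions.**
For τ > 0 and x ∈ X, `f_τ(x) = 0` iff for each i: `(Ax+u)ᵢ ≤ 0` when `dᵢxᵢ = 0`,
`(Ax+u)ᵢ = 0` when `0 < dᵢxᵢ < 1`, and `(Ax+u)ᵢ ≥ 0` when `dᵢxᵢ = 1`. -/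
theorem tau_LTN_equilibrium_characterization
    (n : ℕ) (hn : 1 ≤ n)
    (d : Fin n → ℝ) (hd : ∀ i, 0 < d i)
    (W : Matrix (Fin n) (Fin n) ℝ) (u : Fin n → ℝ)
    (A : Matrix (Fin n) (Fin n) ℝ) (hA : A = W - Matrix.diagonal d)
    (τ : ℝ) (hτ : 0 < τ)
    (x : Fin n → ℝ) (hx : ∀ i, d i * x i ∈ Set.Icc (0:ℝ) 1) :
    fTau n d A u τ x = 0 ↔
      ∀ i, (d i * x i = 0 → (A *ᵥ x + u) i ≤ 0)
        ∧ (0 < d i * x i → d i * x i < 1 → (A *ᵥ x + u) i = 0)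
        ∧ (d i * x i = 1 → 0 ≤ (A *ᵥ x + u) i) :=
  tau_LTN_equilibrium_characterization_general n d u A τ hτ x hx
end

section
/- Suppose A = W - D is Lyapunov diagonally stable with positive diagonal certificate Λ, and set μ = -(1/2)·λ_max(Λ^{-1/2}(A^T Λ + Λ A)Λ^{-1/2}) > 0. Let x* ∈ X be the (unique) point satisfying -Dx* + [Wx* + u]_0^1 = 0. Let x : [0,∞) → X be absolutely continuous with derivative satisfying, for almost every t ≥ 0, ẋ(t) = P(x(t), A x(t) + u), where P(x,v)_i = max(v_i,0) if d_i x_i = 0, v_i if 0 < d_i x_i < 1, and min(v_i,0) if d_i x_i = 1. Then for all t ≥ 0, ‖x(t) - x*‖_Λ ≤ e^{-μ t} ‖x(0) - x*‖_Λ; i.e., x* is globally exponentially stable for the projected dynamical system. -/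
open Matrix MeasureTheory intervalIntegral
open scoped Classical

/-- Componentwise projection of `v` onto the tangent cone of `X` at `x`. -/
noncomputable def projX (n : ℕ) (d : Fin n → ℝ) (x v : Fin n → ℝ) : Fin n → ℝ :=
  fun i =>
    if d i * x i = 0 then max (v i) 0
    else if d i * x i = 1 then min (v i) 0
    else v i

/-!
Take `V = ‖x - x*‖²_Λ` and `z = x - x*`. Along the trajectory `V` is absolutely continuous and,
for almost every `t`,
`V' = 2 zᵀΛ P(x, Ax + u) ≤ 2 zᵀΛ (Ax + u) = zᵀ(AᵀΛ + ΛA)z + 2 zᵀΛ (Ax* + u) ≤ zᵀ(AᵀΛ + ΛA)z`.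
The first inequality holds because `D x* = [Wx* + u]₀¹` puts `x*` in the box `X`, so `z` points
out of `X` wherever `P` clips a component; the second because `Ax* + u = q - [q]₀¹` with
`q = Wx* + u`, and `[·]₀¹` is the metric projection onto `[0, 1]`, which contains `D x`.
Writing `y = Λ^{1/2} z`, the quadratic form equals `yᵀ S y ≤ λ_max(S) ‖y‖² = -2μ V`, and
Grönwall's inequality for absolutely continuous functions gives `V(t) ≤ e^{-2μt} V(0)`.
-/

open Set Real

lemma sat_mem_Icc (z : ℝ) : sat z ∈ Icc (0 : ℝ) 1 :=
  ⟨le_max_left _ _, max_le zero_le_one (min_le_right _ _)⟩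

lemma sub_sat_mul_sub_sat_nonpos {a : ℝ} (ha : a ∈ Icc (0 : ℝ) 1) (q : ℝ) :
    (a - sat q) * (q - sat q) ≤ 0 := by
  obtain ⟨ha0, ha1⟩ := ha
  unfold sat
  rcases le_total q 0 with hq | hq
  · rw [min_eq_left (by linarith), max_eq_left hq]; nlinarith
  rcases le_total q 1 with hq' | hq'
  · rw [min_eq_left hq', max_eq_right hq]; simp
  · rw [min_eq_right hq', max_eq_right zero_le_one]; nlinarith

lemma sub_mul_projX_le {n : ℕ} {d x y : Fin n → ℝ} (v : Fin n → ℝ) {i : Fin n} (hd : 0 < d i)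
    (hx : d i * x i ∈ Icc (0 : ℝ) 1) (hy : d i * y i ∈ Icc (0 : ℝ) 1) :
    (x i - y i) * projX n d x v i ≤ (x i - y i) * v i := by
  obtain ⟨hx0, hx1⟩ := hx
  obtain ⟨hy0, hy1⟩ := hy
  unfold projX
  split_ifs with h0 h1
  · rcases le_total 0 (v i) with hv | hv
    · rw [max_eq_left hv]
    · rw [max_eq_right hv]; nlinarith
  · rcases le_total (v i) 0 with hv | hv
    · rw [min_eq_left hv]
    · rw [min_eq_right hv]; nlinarith
  · exact le_rfl

lemma dotProduct_mulVec_le_iSup_eigenvalues_mul {ι : Type*} [Fintype ι] [DecidableEq ι]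
    {S : Matrix ι ι ℝ} (hS : S.IsHermitian) (y : ι → ℝ) :
    y ⬝ᵥ (S *ᵥ y) ≤ (⨆ i, hS.eigenvalues i) * (y ⬝ᵥ y) := by
  set c := ⨆ i, hS.eigenvalues i
  have hpsd : (algebraMap ℝ _ c - S).PosSemidef := by
    refine posSemidef_iff_isHermitian_and_spectrum_nonneg.2 ⟨?_, ?_⟩
    · exact (isHermitian_diagonal _).sub hS
    · rw [← spectrum.singleton_sub_eq, hS.spectrum_real_eq_range_eigenvalues]
      rintro _ ⟨_, rfl, _, ⟨i, rfl⟩, rfl⟩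
      exact sub_nonneg.2 (le_ciSup (finite_range hS.eigenvalues).bddAbove i)
  have := hpsd.dotProduct_mulVec_nonneg y
  rw [sub_mulVec, dotProduct_sub, Algebra.algebraMap_eq_smul_one, smul_mulVec, one_mulVec,
    dotProduct_smul, smul_eq_mul, star_trivial] at this
  linarith

lemma dotProduct_transpose_mul_diagonal_add_mulVec {ι : Type*} [Fintype ι] [DecidableEq ι]
    (A : Matrix ι ι ℝ) (lam z : ι → ℝ) :
    z ⬝ᵥ ((Aᵀ * diagonal lam + diagonal lam * A) *ᵥ z) = 2 * ∑ i, lam i * (z i * (A *ᵥ z) i) := by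
  rw [add_mulVec, dotProduct_add, ← mulVec_mulVec, ← mulVec_mulVec, dotProduct_mulVec z Aᵀ,
    vecMul_transpose]
  simp only [dotProduct, mulVec_diagonal, Finset.mul_sum, ← Finset.sum_add_distrib]
  exact Finset.sum_congr rfl fun i _ => by ring

lemma dotProduct_diagonal_mul_mul_diagonal_mulVec {ι : Type*} [Fintype ι] [DecidableEq ι]
    (r : ι → ℝ) (M : Matrix ι ι ℝ) (y : ι → ℝ) :
    y ⬝ᵥ ((diagonal r * M * diagonal r) *ᵥ y) = (r * y) ⬝ᵥ (M *ᵥ (r * y)) := by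
  have hleft : y ᵥ* diagonal r = r * y :=
    funext fun i => (vecMul_diagonal y r i).trans (mul_comm _ _)
  have hright : diagonal r *ᵥ y = r * y := funext (mulVec_diagonal r y)
  rw [← mulVec_mulVec, ← mulVec_mulVec, dotProduct_mulVec, hleft, hright]

lemma dotProduct_mulVec_le_iSup_eigenvalues_weighted {ι : Type*} [Fintype ι] [DecidableEq ι]
    {lam : ι → ℝ} (hlam : ∀ i, 0 < lam i) (M : Matrix ι ι ℝ) {S : Matrix ι ι ℝ}
    (hS : S = diagonal (fun i => (√(lam i))⁻¹) * M * diagonal (fun i => (√(lam i))⁻¹))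
    (hSh : S.IsHermitian) (z : ι → ℝ) :
    z ⬝ᵥ (M *ᵥ z) ≤ (⨆ i, hSh.eigenvalues i) * ∑ i, lam i * z i ^ 2 := by
  subst hS
  have hsqrt (i : ι) : √(lam i) ≠ 0 := (Real.sqrt_pos.2 (hlam i)).ne'
  set y : ι → ℝ := fun i => √(lam i) * z i
  have hz : (fun i => (√(lam i))⁻¹) * y = z := funext fun i => inv_mul_cancel_left₀ (hsqrt i) (z i)
  have hy : y ⬝ᵥ y = ∑ i, lam i * z i ^ 2 := Finset.sum_congr rfl fun i _ => by
    simp only [y]; rw [mul_mul_mul_comm, Real.mul_self_sqrt (hlam i).le, sq]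
  have := dotProduct_mulVec_le_iSup_eigenvalues_mul hSh y
  rwa [dotProduct_diagonal_mul_mul_diagonal_mulVec, hz, hy] at this

theorem AbsolutelyContinuousOnInterval.finset_sum {ι : Type*} (s : Finset ι) {f : ι → ℝ → ℝ}
    {a b : ℝ} (hf : ∀ i ∈ s, AbsolutelyContinuousOnInterval (f i) a b) :
    AbsolutelyContinuousOnInterval (fun x => ∑ i ∈ s, f i x) a b := by
  classical
  induction s using Finset.induction_on with
  | empty => simpa using contDiffOn_const.absolutelyContinuousOnInterval
  | insert j s hj ih =>
    simp_rw [Finset.sum_insert hj]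
    exact (hf j (Finset.mem_insert_self j s)).fun_add
      (ih fun i hi => hf i (Finset.mem_insert_of_mem hi))

theorem AbsolutelyContinuousOnInterval.le_exp_mul_of_ae_deriv_le {f : ℝ → ℝ} {a b c : ℝ}
    (hab : a ≤ b) (hf : AbsolutelyContinuousOnInterval f a b)
    (hf' : ∀ᵐ s, s ∈ Icc a b → deriv f s ≤ c * f s) :
    f b ≤ exp (c * (b - a)) * f a := by
  set g : ℝ → ℝ := fun s => exp (-(c * s)) * f s
  have hg : AbsolutelyContinuousOnInterval g a b :=
    (ContDiff.contDiffOn (by fun_prop)).absolutelyContinuousOnInterval.fun_mul hf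
  have hg' : ∀ᵐ s ∂volume.restrict (Icc a b), 0 ≤ -deriv g s := by
    rw [ae_restrict_iff' measurableSet_Icc]
    filter_upwards [hf.ae_differentiableAt, hf'] with s hdiff hle hs
    rw [uIcc_of_le hab] at hdiff
    have hderiv : HasDerivAt g (exp (-(c * s)) * (deriv f s - c * f s)) s :=
      ((((hasDerivAt_id s).const_mul c).neg.exp).mul (hdiff hs).hasDerivAt).congr_deriv
        (by simp only [Pi.neg_apply, id]; ring)
    rw [hderiv.deriv]
    nlinarith [exp_pos (-(c * s)), hle hs]
  have := intervalIntegral.integral_nonneg_of_ae_restrict hab hg'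
  rw [intervalIntegral.integral_neg, hg.integral_deriv_eq_sub] at this
  calc f b = exp (c * b) * g b := by
        rw [← mul_assoc, ← exp_add, add_neg_cancel, exp_zero, one_mul]
    _ ≤ exp (c * b) * g a := mul_le_mul_of_nonneg_left (by linarith) (exp_pos _).le
    _ = exp (c * (b - a)) * f a := by rw [← mul_assoc, ← exp_add, mul_sub, sub_eq_add_neg]

theorem sum_mul_sq_sub_le_exp_mul_of_eq_add_integral {ι : Type*} [Fintype ι] {x p : ℝ → ι → ℝ}
    {lam c : ι → ℝ} {κ t : ℝ} (ht : 0 ≤ t)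
    (hp : ∀ i, IntervalIntegrable (fun s => p s i) volume 0 t)
    (hx : ∀ s ∈ Icc 0 t, ∀ i, x s i = x 0 i + ∫ r in 0..s, p r i)
    (hdiss : ∀ s ∈ Icc 0 t,
      ∑ i, lam i * (2 * (x s i - c i) * p s i) ≤ κ * ∑ i, lam i * (x s i - c i) ^ 2) :
    ∑ i, lam i * (x t i - c i) ^ 2 ≤ exp (κ * t) * ∑ i, lam i * (x 0 i - c i) ^ 2 := by
  -- `x` is only known to agree with its integral representation on `[0, t]`.
  set V : ℝ → ℝ := fun s => ∑ i, lam i * (x 0 i - c i + ∫ r in 0..s, p r i) ^ 2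
  have hV (s : ℝ) (hs : s ∈ Icc 0 t) : V s = ∑ i, lam i * (x s i - c i) ^ 2 :=
    Finset.sum_congr rfl fun i _ => by rw [hx s hs i]; ring
  have hVac : AbsolutelyContinuousOnInterval V 0 t := by
    refine AbsolutelyContinuousOnInterval.finset_sum _ fun i _ => ?_
    have hF : AbsolutelyContinuousOnInterval (fun s => x 0 i - c i + ∫ r in 0..s, p r i) 0 t :=
      contDiffOn_const.absolutelyContinuousOnInterval.fun_add
        ((hp i).absolutelyContinuousOnInterval_intervalIntegral left_mem_uIcc)
    simpa only [sq] using (hF.fun_mul hF).const_mul (lam i)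
  have hVderiv : ∀ᵐ s, s ∈ Icc 0 t → deriv V s ≤ κ * V s := by
    filter_upwards [ae_all_iff.2 fun i => (hp i).ae_hasDerivAt_integral] with s hderiv hs
    have hs' : s ∈ uIcc 0 t := by rwa [uIcc_of_le ht]
    have hVs : HasDerivAt V (∑ i, lam i * (2 * (x s i - c i) * p s i)) s := by
      refine HasDerivAt.fun_sum fun i _ => ?_
      refine ((((hderiv i hs' 0 left_mem_uIcc).const_add (x 0 i - c i)).pow 2).const_mul
        (lam i)).congr_deriv ?_
      rw [hx s hs i]
      push_cast
      ring
    rw [hVs.deriv, hV s hs]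
    exact hdiss s hs
  have := hVac.le_exp_mul_of_ae_deriv_le ht hVderiv
  rwa [hV t ⟨ht, le_rfl⟩, hV 0 ⟨le_rfl, ht⟩, sub_zero] at this

section ProjectedDynamics

variable {n : ℕ} {d : Fin n → ℝ} {W A : Matrix (Fin n) (Fin n) ℝ} {u xs x : Fin n → ℝ}

lemma sub_mul_projX_le_sub_mul_mulVec_sub (hd : ∀ i, 0 < d i) (hA : A = W - diagonal d)
    (hxs : -(diagonal d *ᵥ xs) + (fun i => sat ((W *ᵥ xs + u) i)) = 0)
    (hx : ∀ i, d i * x i ∈ Icc (0 : ℝ) 1) (i : Fin n) :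
    (x i - xs i) * projX n d x (A *ᵥ x + u) i ≤ (x i - xs i) * (A *ᵥ (x - xs)) i := by
  set q := (W *ᵥ xs + u) i
  have hdxs : d i * xs i = sat q :=
    (mulVec_diagonal d xs i).symm.trans (congrFun (neg_add_eq_zero.1 hxs) i)
  have hv : (A *ᵥ x + u) i = (A *ᵥ (x - xs)) i + (q - sat q) := by
    rw [← hdxs]
    simp only [q, hA, mulVec_sub, sub_mulVec, Pi.add_apply, Pi.sub_apply, mulVec_diagonal]
    ring
  have hequil : (x i - xs i) * (q - sat q) ≤ 0 := by
    have := sub_sat_mul_sub_sat_nonpos (hx i) q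
    rw [← hdxs, ← mul_sub, mul_assoc] at this
    rw [← hdxs]
    exact nonpos_of_mul_nonpos_right this (hd i)
  calc (x i - xs i) * projX n d x (A *ᵥ x + u) i
      ≤ (x i - xs i) * (A *ᵥ x + u) i := sub_mul_projX_le _ (hd i) (hx i) (hdxs ▸ sat_mem_Icc q)
    _ = (x i - xs i) * (A *ᵥ (x - xs)) i + (x i - xs i) * (q - sat q) := by rw [hv, mul_add]
    _ ≤ (x i - xs i) * (A *ᵥ (x - xs)) i := by linarith

lemma sum_mul_sub_mul_projX_le {lam : Fin n → ℝ} {S : Matrix (Fin n) (Fin n) ℝ}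
    (hd : ∀ i, 0 < d i) (hA : A = W - diagonal d) (hlam : ∀ i, 0 < lam i)
    (hS : S = diagonal (fun i => (√(lam i))⁻¹) * (Aᵀ * diagonal lam + diagonal lam * A)
        * diagonal (fun i => (√(lam i))⁻¹))
    (hSh : S.IsHermitian)
    (hxs : -(diagonal d *ᵥ xs) + (fun i => sat ((W *ᵥ xs + u) i)) = 0)
    (hx : ∀ i, d i * x i ∈ Icc (0 : ℝ) 1) :
    ∑ i, lam i * (2 * (x i - xs i) * projX n d x (A *ᵥ x + u) i)
      ≤ (⨆ i, hSh.eigenvalues i) * ∑ i, lam i * (x i - xs i) ^ 2 :=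
  calc ∑ i, lam i * (2 * (x i - xs i) * projX n d x (A *ᵥ x + u) i)
      ≤ 2 * ∑ i, lam i * ((x i - xs i) * (A *ᵥ (x - xs)) i) := by
        rw [Finset.mul_sum]
        refine Finset.sum_le_sum fun i _ => ?_
        nlinarith [mul_le_mul_of_nonneg_left (sub_mul_projX_le_sub_mul_mulVec_sub hd hA hxs hx i)
          (hlam i).le]
    _ = (x - xs) ⬝ᵥ ((Aᵀ * diagonal lam + diagonal lam * A) *ᵥ (x - xs)) :=
        (dotProduct_transpose_mul_diagonal_add_mulVec A lam (x - xs)).symm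
    _ ≤ (⨆ i, hSh.eigenvalues i) * ∑ i, lam i * (x i - xs i) ^ 2 :=
        dotProduct_mulVec_le_iSup_eigenvalues_weighted hlam _ hS hSh (x - xs)

end ProjectedDynamics

theorem PDS_global_exponential_stability_general
    (n : ℕ)
    (d : Fin n → ℝ) (hd : ∀ i, 0 < d i)
    (W : Matrix (Fin n) (Fin n) ℝ) (u : Fin n → ℝ)
    (A : Matrix (Fin n) (Fin n) ℝ) (hA : A = W - Matrix.diagonal d)
    (lam : Fin n → ℝ) (hlam : ∀ i, 0 < lam i)
    (S : Matrix (Fin n) (Fin n) ℝ)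
    (hS : S = Matrix.diagonal (fun i => (Real.sqrt (lam i))⁻¹)
        * (Aᵀ * Matrix.diagonal lam + Matrix.diagonal lam * A)
        * Matrix.diagonal (fun i => (Real.sqrt (lam i))⁻¹))
    (hSh : S.IsHermitian)
    (μ : ℝ) (hμ : μ = -(1/2) * (⨆ i, hSh.eigenvalues i))
    (xs : Fin n → ℝ)
    (hxs : -(Matrix.diagonal d *ᵥ xs) + (fun i => sat ((W *ᵥ xs + u) i)) = 0)
    (x : ℝ → Fin n → ℝ)
    (hxX : ∀ t : ℝ, 0 ≤ t → ∀ i, d i * x t i ∈ Set.Icc (0:ℝ) 1)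
    (hint : ∀ t : ℝ, 0 ≤ t →
      IntervalIntegrable (fun s => projX n d (x s) (A *ᵥ x s + u)) volume 0 t)
    (hsol : ∀ t : ℝ, 0 ≤ t →
      x t = x 0 + ∫ s in (0:ℝ)..t, projX n d (x s) (A *ᵥ x s + u)) :
    ∀ t : ℝ, 0 ≤ t →
      Real.sqrt (∑ i, lam i * (x t i - xs i) ^ 2)
        ≤ Real.exp (-μ * t) * Real.sqrt (∑ i, lam i * (x 0 i - xs i) ^ 2) := by
  intro t ht
  have hcoord (s : ℝ) (hs : s ∈ Icc 0 t) (i : Fin n) :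
      x s i = x 0 i + ∫ r in 0..s, projX n d (x r) (A *ᵥ x r + u) i := by
    rw [hsol s hs.1, Pi.add_apply]
    exact congrArg (x 0 i + ·) ((ContinuousLinearMap.proj (R := ℝ) (φ := fun _ : Fin n => ℝ)
      i).intervalIntegral_comp_comm (hint s hs.1)).symm
  have hsup : (⨆ i, hSh.eigenvalues i) = 2 * -μ := by rw [hμ]; ring
  have hV := sum_mul_sq_sub_le_exp_mul_of_eq_add_integral ht
    (fun i => ⟨(hint t ht).1.eval i, (hint t ht).2.eval i⟩) hcoord
    fun s hs => hsup ▸ sum_mul_sub_mul_projX_le hd hA hlam hS hSh hxs (hxX s hs.1)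
  rw [show exp (2 * -μ * t) = exp (-μ * t) ^ 2 by rw [sq, ← exp_add]; ring_nf] at hV
  calc √(∑ i, lam i * (x t i - xs i) ^ 2)
      ≤ √(exp (-μ * t) ^ 2 * ∑ i, lam i * (x 0 i - xs i) ^ 2) := sqrt_le_sqrt hV
    _ = exp (-μ * t) * √(∑ i, lam i * (x 0 i - xs i) ^ 2) := by
        rw [sqrt_mul (sq_nonneg _), sqrt_sq (exp_pos _).le]

/-- **Global exponential stability of the fast PDS limit under LDS.**
If `A = W - D` is Lyapunov diagonally stable with certificate Λ and
`μ = -(1/2) λ_max(Λ^{-1/2}(AᵀΛ + ΛA)Λ^{-1/2})`, then any absolutely continuous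
solution of the projected dynamical system `ẋ = Π_X(x, Ax + u)` (encoded in
integral form) satisfies `‖x(t) - x*‖_Λ ≤ e^{-μt}‖x(0) - x*‖_Λ` for all `t ≥ 0`,
where `x*` is the unique LTN equilibrium. -/
theorem PDS_global_exponential_stability
    (n : ℕ) (hn : 1 ≤ n)
    (d : Fin n → ℝ) (hd : ∀ i, 0 < d i)
    (W : Matrix (Fin n) (Fin n) ℝ) (u : Fin n → ℝ)
    (A : Matrix (Fin n) (Fin n) ℝ) (hA : A = W - Matrix.diagonal d)
    (lam : Fin n → ℝ) (hlam : ∀ i, 0 < lam i)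
    (hneg : ∀ z : Fin n → ℝ, z ≠ 0 →
      z ⬝ᵥ ((Aᵀ * Matrix.diagonal lam + Matrix.diagonal lam * A) *ᵥ z) < 0)
    (S : Matrix (Fin n) (Fin n) ℝ)
    (hS : S = Matrix.diagonal (fun i => (Real.sqrt (lam i))⁻¹)
        * (Aᵀ * Matrix.diagonal lam + Matrix.diagonal lam * A)
        * Matrix.diagonal (fun i => (Real.sqrt (lam i))⁻¹))
    (hSh : S.IsHermitian)
    (μ : ℝ) (hμ : μ = -(1/2) * (⨆ i, hSh.eigenvalues i))
    (xs : Fin n → ℝ) (hxsX : ∀ i, d i * xs i ∈ Set.Icc (0:ℝ) 1)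
    (hxs : -(Matrix.diagonal d *ᵥ xs) + (fun i => sat ((W *ᵥ xs + u) i)) = 0)
    (x : ℝ → Fin n → ℝ)
    (hxX : ∀ t : ℝ, 0 ≤ t → ∀ i, d i * x t i ∈ Set.Icc (0:ℝ) 1)
    (hint : ∀ t : ℝ, 0 ≤ t →
      IntervalIntegrable (fun s => projX n d (x s) (A *ᵥ x s + u)) volume 0 t)
    (hsol : ∀ t : ℝ, 0 ≤ t →
      x t = x 0 + ∫ s in (0:ℝ)..t, projX n d (x s) (A *ᵥ x s + u)) :
    ∀ t : ℝ, 0 ≤ t →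
      Real.sqrt (∑ i, lam i * (x t i - xs i) ^ 2)
        ≤ Real.exp (-μ * t) * Real.sqrt (∑ i, lam i * (x 0 i - xs i) ^ 2) :=
  PDS_global_exponential_stability_general n d hd W u A hA lam hlam S hS hSh μ hμ xs hxs x hxX hint
    hsol
end

section
/- Let x : [0,∞) → ℝ^n be absolutely continuous with x(0) ∈ X and suppose that for almost every s ≥ 0 the derivative satisfies ẋ(s) ∈ -D x(s) + H(A x(s) + u), i.e., there exists σ(s) with σ_i(s) ∈ h((A x(s) + u)_i) for each i and ẋ(s) = -D x(s) + σ(s). Then x(s) ∈ X for all s ≥ 0. -/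
open Matrix MeasureTheory intervalIntegral
open scoped Classical

/-!
The coordinates decouple: `xᵢ` solves `ẏ = -dᵢ y + σᵢ` with `σᵢ ∈ [0, 1]` almost everywhere,
whatever the coupling through `A` is. Above the level `1/dᵢ` the drift is negative and below `0`
it is positive, so `xᵢ` cannot leave `[0, 1/dᵢ]`: at the last time before `t` at which `xᵢ` was
still at most the barrier, the integral of the drift up to `t` is nonpositive.
-/

/-- Convexified hard-selector map `h`. -/
noncomputable def hsel (z : ℝ) : Set ℝ :=
  if z < 0 then {0} else if z = 0 then Set.Icc 0 1 else {1}

open Set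

lemma hsel_subset_Icc (z : ℝ) : hsel z ⊆ Icc 0 1 := by
  unfold hsel
  split_ifs <;> simp

section Pi

variable {ι : Type*} [Fintype ι] {F : ℝ → ι → ℝ} {a b : ℝ}

lemma IntervalIntegrable.eval (hF : IntervalIntegrable F volume a b) (i : ι) :
    IntervalIntegrable (F · i) volume a b :=
  ⟨hF.1.eval i, hF.2.eval i⟩

lemma intervalIntegral.eval_integral (hF : IntervalIntegrable F volume a b) (i : ι) :
    (∫ s in a..b, F s) i = ∫ s in a..b, F s i := by
  simp only [intervalIntegral, Pi.sub_apply, MeasureTheory.eval_integral hF.1.eval,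
    MeasureTheory.eval_integral hF.2.eval]

end Pi

lemma ContinuousOn.exists_last_le {y : ℝ → ℝ} {a b c : ℝ} (hy : ContinuousOn y (Icc a b))
    (hab : a ≤ b) (ha : y a ≤ c) :
    ∃ t ∈ Icc a b, y t ≤ c ∧ ∀ s ∈ Ioc t b, c < y s := by
  have hS : IsClosed (Icc a b ∩ y ⁻¹' Iic c) :=
    hy.preimage_isClosed_of_isClosed isClosed_Icc isClosed_Iic
  obtain ⟨t, ⟨htab, hyt⟩, hmax⟩ :=
    (isCompact_Icc.of_isClosed_subset hS inter_subset_left).exists_isGreatest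
      ⟨a, left_mem_Icc.2 hab, ha⟩
  refine ⟨t, htab, hyt, fun s hs => lt_of_not_ge fun hys => ?_⟩
  exact (hmax ⟨⟨htab.1.trans hs.1.le, hs.2⟩, hys⟩).not_gt hs.1

theorem le_of_eq_integral_of_nonpos_above {y f : ℝ → ℝ} {c T : ℝ} (hT : 0 ≤ T)
    (hf : IntervalIntegrable f volume 0 T)
    (hy : ∀ t ∈ Icc 0 T, y t = y 0 + ∫ s in 0..t, f s)
    (hfc : ∀ᵐ s, s ∈ Ioc 0 T → c < y s → f s ≤ 0) (h0 : y 0 ≤ c) :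
    y T ≤ c := by
  have hcont : ContinuousOn y (Icc 0 T) := by
    have := continuousOn_primitive_interval' hf left_mem_uIcc
    rw [uIcc_of_le hT] at this
    exact (continuousOn_const.add this).congr hy
  by_contra! hyT
  obtain ⟨t, ht, hyt, habove⟩ := hcont.exists_last_le hT h0
  have htT : t < T := lt_of_le_of_ne ht.2 (by rintro rfl; linarith)
  have hincr : y T - y t = ∫ s in t..T, f s := by
    have h0t : IntervalIntegrable f volume 0 t :=
      hf.mono_set (by rw [uIcc_of_le ht.1, uIcc_of_le hT]; exact Icc_subset_Icc_right ht.2)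
    rw [hy T (right_mem_Icc.2 hT), hy t ht, ← integral_interval_sub_left hf h0t]
    ring
  have hnonpos : ∫ s in t..T, f s ≤ 0 := by
    rw [← neg_nonneg, ← intervalIntegral.integral_neg]
    refine integral_nonneg_of_ae_restrict htT.le ?_
    rw [← restrict_Ioc_eq_restrict_Icc]
    filter_upwards [ae_restrict_of_ae hfc, ae_restrict_mem measurableSet_Ioc] with s hs hst
    exact neg_nonneg.2 (hs ⟨ht.1.trans_lt hst.1, hst.2⟩ (habove s hst))
  linarith

theorem mul_mem_Icc_of_relaxation {d T : ℝ} {y σ : ℝ → ℝ} (hd : 0 < d) (hT : 0 ≤ T)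
    (hint : IntervalIntegrable (fun s => -(d * y s) + σ s) volume 0 T)
    (hσ : ∀ᵐ s, s ∈ Ioc 0 T → σ s ∈ Icc 0 1)
    (hy : ∀ t ∈ Icc 0 T, y t = y 0 + ∫ s in 0..t, (-(d * y s) + σ s))
    (h0 : d * y 0 ∈ Icc 0 1) : d * y T ∈ Icc 0 1 := by
  have hupper : y T ≤ 1 / d := by
    refine le_of_eq_integral_of_nonpos_above hT hint hy ?_ ((le_div_iff₀' hd).2 h0.2)
    filter_upwards [hσ] with s hs hsT hys
    have := (hs hsT).2
    have := (div_lt_iff₀' hd).1 hys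
    linarith
  have hlower : -y T ≤ 0 := by
    refine le_of_eq_integral_of_nonpos_above (y := fun s => -y s)
      (f := fun s => -(-(d * y s) + σ s)) hT hint.neg
      (fun t ht => by rw [intervalIntegral.integral_neg, hy t ht]; ring) ?_
      (neg_nonpos.2 ((mul_nonneg_iff_of_pos_left hd).1 h0.1))
    filter_upwards [hσ] with s hs hsT hys
    have := (hs hsT).1
    nlinarith
  exact ⟨mul_nonneg hd.le (neg_nonpos.1 hlower), (le_div_iff₀' hd).1 hupper⟩

theorem HSS_forward_invariance_general
    (n : ℕ)
    (d : Fin n → ℝ) (hd : ∀ i, 0 < d i)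
    (u : Fin n → ℝ)
    (A : Matrix (Fin n) (Fin n) ℝ)
    (x σ : ℝ → Fin n → ℝ)
    (hx0 : ∀ i, d i * x 0 i ∈ Set.Icc (0:ℝ) 1)
    (hσ : ∀ᵐ s : ℝ ∂volume, 0 ≤ s → ∀ i, σ s i ∈ hsel ((A *ᵥ x s + u) i))
    (hint : ∀ t : ℝ, 0 ≤ t →
      IntervalIntegrable (fun s => -(Matrix.diagonal d *ᵥ x s) + σ s) volume 0 t)
    (hsol : ∀ t : ℝ, 0 ≤ t →
      x t = x 0 + ∫ s in (0:ℝ)..t, (-(Matrix.diagonal d *ᵥ x s) + σ s)) :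
    ∀ s : ℝ, 0 ≤ s → ∀ i, d i * x s i ∈ Set.Icc (0:ℝ) 1 := by
  intro T hT i
  have hcoord (s : ℝ) : (-(Matrix.diagonal d *ᵥ x s) + σ s) i = -(d i * x s i) + σ s i := by
    simp [mulVec_diagonal]
  refine mul_mem_Icc_of_relaxation (hd i) hT (by simpa only [hcoord] using (hint T hT).eval i)
    ?_ (fun t ht => ?_) (hx0 i)
  · filter_upwards [hσ] with s hs hsT
    exact hsel_subset_Icc _ (hs hsT.1.le i)
  · rw [congrFun (hsol t ht.1) i, Pi.add_apply, eval_integral (hint t ht.1)]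
    simp only [hcoord]

/-- **Strong forward invariance of X for the hard-selector inclusion.**
Any absolutely continuous trajectory (encoded in integral form via a selection σ)
starting in `X = {x : dᵢxᵢ ∈ [0,1]}` and satisfying
`ẋ(s) ∈ -Dx(s) + H(Ax(s) + u)` for a.e. `s ≥ 0` remains in `X` for all `s ≥ 0`. -/
theorem HSS_forward_invariance
    (n : ℕ) (hn : 1 ≤ n)
    (d : Fin n → ℝ) (hd : ∀ i, 0 < d i)
    (W : Matrix (Fin n) (Fin n) ℝ) (u : Fin n → ℝ)
    (A : Matrix (Fin n) (Fin n) ℝ) (hA : A = W - Matrix.diagonal d)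
    (x σ : ℝ → Fin n → ℝ)
    (hx0 : ∀ i, d i * x 0 i ∈ Set.Icc (0:ℝ) 1)
    (hσ : ∀ᵐ s : ℝ ∂volume, 0 ≤ s → ∀ i, σ s i ∈ hsel ((A *ᵥ x s + u) i))
    (hint : ∀ t : ℝ, 0 ≤ t →
      IntervalIntegrable (fun s => -(Matrix.diagonal d *ᵥ x s) + σ s) volume 0 t)
    (hsol : ∀ t : ℝ, 0 ≤ t →
      x t = x 0 + ∫ s in (0:ℝ)..t, (-(Matrix.diagonal d *ᵥ x s) + σ s)) :
    ∀ s : ℝ, 0 ≤ s → ∀ i, d i * x s i ∈ Set.Icc (0:ℝ) 1 :=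
  HSS_forward_invariance_general n d hd u A x σ hx0 hσ hint hsol
end
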